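/- Let P_F be a forward policy with P_F(s'|s) > 0 for every edge s→s' of G, and let Z > 0. Then F(s) > 0 for every state s that lies on some complete trajectory—in fact for every state s, since in G every state lies on a complete trajectory—and the induced backward policy P_B^F(s|s') := F(s→s')/F(s') is a backward policy (for each noninitial s' it is a probability distribution on the parents of s'). Moreover H[P_F] = Σ_{complete trajectories τ = (t₀→⋯→t_D)} P_F(τ)·Σ_{i=1}^{D} H[P_B^F(·|t_i)] + log Z − (1/Z)·Σ_{x∈X} F(x)·log F(x). -/

import Mathlib

open scoped BigOperators Classical

/-- The GFlowNet state space `S = {0,1,⊘}^D`: functions from `Fin D` to `Option Bool`,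
with `none` denoting the unspecified entry `⊘`. -/
abbrev GState (D : ℕ) := Fin D → Option Bool

/-- The initial state `s₀`, with all entries `⊘`. -/
def initState (D : ℕ) : GState D := fun _ => none

/-- `s'` is a child of `s` (edge `s → s'` of the DAG `G`): `s'` is obtained from `s`
by changing exactly one `⊘`-entry of `s` to `0` or `1`. -/
def IsChild {D : ℕ} (s s' : GState D) : Prop :=
  ∃ (i : Fin D) (b : Bool), s i = none ∧ s' = Function.update s i (some b)

/-- Terminal states: no `⊘`-entry. -/
def IsTerminal {D : ℕ} (s : GState D) : Prop := ∀ i, s i ≠ none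

/-- The embedding of `X = {0,1}^D` as the set of terminal states. -/
def ofX {D : ℕ} (x : Fin D → Bool) : GState D := fun i => some (x i)

/-- `|s|`: the number of non-`⊘` entries of `s`. -/
def numAssigned {D : ℕ} (s : GState D) : ℕ :=
  (Finset.univ.filter fun i => s i ≠ none).card

/-- A complete trajectory `τ = (t₀ → t₁ → ⋯ → t_n)`, encoded as the list of its states:
it starts at `s₀`, each consecutive pair is an edge of `G`, and it ends at a terminal state. -/
def IsCompleteTraj {D : ℕ} (l : List (GState D)) : Prop :=
  l.head? = some (initState D) ∧ l.Chain' IsChild ∧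
    ∃ s, l.getLast? = some s ∧ IsTerminal s

/-- The trajectory `l` ends at the terminal state corresponding to `x ∈ X`. -/
def EndsAt {D : ℕ} (l : List (GState D)) (x : Fin D → Bool) : Prop :=
  l.getLast? = some (ofX x)

/-- `PF` is a forward policy: for every nonterminal `s`, `PF s ·` is a probability
distribution supported on the children of `s` (`PF s s'` is `P_F(s'|s)`). -/
def IsForwardPolicy {D : ℕ} (PF : GState D → GState D → ℝ) : Prop :=
  ∀ s : GState D, ¬ IsTerminal s →
    (∀ s', 0 ≤ PF s s') ∧ (∀ s', PF s s' ≠ 0 → IsChild s s') ∧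
    (∑ s' : GState D, PF s s' = 1)

/-- `PB` is a backward policy: for every noninitial `s'`, `PB s' ·` is a probability
distribution supported on the parents of `s'` (`PB s' s` is `P_B(s|s')`). -/
def IsBackwardPolicy {D : ℕ} (PB : GState D → GState D → ℝ) : Prop :=
  ∀ s' : GState D, s' ≠ initState D →
    (∀ s, 0 ≤ PB s' s) ∧ (∀ s, PB s' s ≠ 0 → IsChild s s') ∧
    (∑ s : GState D, PB s' s = 1)

/-- `P_F(τ) = ∏_{i<n} P_F(t_{i+1}|t_i)` along a trajectory. -/
def trajPF {D : ℕ} (PF : GState D → GState D → ℝ) (l : List (GState D)) : ℝ :=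
  ((l.zip l.tail).map fun p => PF p.1 p.2).prod

/-- `P_B(τ|x) = ∏_{i<n} P_B(t_i|t_{i+1})` along a trajectory. -/
def trajPB {D : ℕ} (PB : GState D → GState D → ℝ) (l : List (GState D)) : ℝ :=
  ((l.zip l.tail).map fun p => PB p.2 p.1).prod

/-- Trajectory balance for reward `R`: `Z·P_F(τ) = R(x)·P_B(τ|x)` for every complete
trajectory `τ` ending at `x`. -/
def TrajBalance {D : ℕ} (PF PB : GState D → GState D → ℝ) (Z : ℝ)
    (R : (Fin D → Bool) → ℝ) : Prop :=
  ∀ (l : List (GState D)) (x : Fin D → Bool),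
    IsCompleteTraj l → EndsAt l x → Z * trajPF PF l = R x * trajPB PB l

/-- The terminating probability `P_T(x)`: the sum of `P_F(τ)` over all complete
trajectories ending at `x`. -/
noncomputable def PT {D : ℕ} (PF : GState D → GState D → ℝ) (x : Fin D → Bool) : ℝ :=
  ∑ᶠ l ∈ {l : List (GState D) | IsCompleteTraj l ∧ EndsAt l x}, trajPF PF l

/-- A path in `G` from `s` to `t`, encoded as the list of its states. -/
def IsPath {D : ℕ} (l : List (GState D)) (s t : GState D) : Prop :=
  l.Chain' IsChild ∧ l.head? = some s ∧ l.getLast? = some t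
/-- The state flow `F(s)`: sum of `F(τ) = Z·P_F(τ)` over complete trajectories through `s`. -/
noncomputable def stateFlow {D : ℕ} (PF : GState D → GState D → ℝ) (Z : ℝ)
    (s : GState D) : ℝ :=
  ∑ᶠ l ∈ {l : List (GState D) | IsCompleteTraj l ∧ s ∈ l}, Z * trajPF PF l

/-- The edge flow `F(s→s')`: sum of `F(τ) = Z·P_F(τ)` over complete trajectories
containing the edge `s → s'`. -/
noncomputable def edgeFlow {D : ℕ} (PF : GState D → GState D → ℝ) (Z : ℝ)
    (s s' : GState D) : ℝ :=
  ∑ᶠ l ∈ {l : List (GState D) | IsCompleteTraj l ∧ (s, s') ∈ l.zip l.tail}, Z * trajPF PF l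

/-- The Shannon entropy `H[P_F(·|s)]` of the forward policy at `s` (natural log,
with `0·log 0 = 0`). -/
noncomputable def stepEntropyF {D : ℕ} (PF : GState D → GState D → ℝ) (s : GState D) : ℝ :=
  ∑ s' : GState D, Real.negMulLog (PF s s')

/-- The entropy of the flow determined by `P_F`:
`H[P_F] = Σ_τ P_F(τ) · Σ_{i<n} H[P_F(·|t_i)]`. -/
noncomputable def flowEntropy {D : ℕ} (PF : GState D → GState D → ℝ) : ℝ :=
  ∑ᶠ l ∈ {l : List (GState D) | IsCompleteTraj l},
    trajPF PF l * (l.dropLast.map (stepEntropyF PF)).sum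

/-- The uniform backward policy `P_B°(s|s') = 1/|s'|` for each parent `s` of `s'`. -/
noncomputable def uniformBackward (D : ℕ) : GState D → GState D → ℝ :=
  fun s' s => if IsChild s s' then 1 / (numAssigned s' : ℝ) else 0


/-!
Write `ρ(s)` for the `P_F`-mass of the complete trajectories through `s` and `ε(a, b)` for that
of the trajectories through the edge `a → b`, so that `F = Z·ρ`. Cutting a trajectory at `a → b`
gives `ε(a, b) = (mass of the paths s₀ → a) · P_F(b|a) · (mass of the terminal paths from b)`,
and the last factor is `1` by induction on the number of `⊘`-entries. On a trajectory a
nonterminal state has exactly one successor and a noninitial one exactly one predecessor, so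
`Σ_b ε(a, b) = ρ(a)` and `Σ_a ε(a, b) = ρ(b)`; hence `ε(a, b) = ρ(a)·P_F(b|a)`, and `P_B^F` is a
distribution.

If weights `p_i` have total `m ≠ 0`, then `m · H[p/m] = Σ_i negMulLog p_i + m log m`. Applied to
`ε(a, ·)` and to `ε(·, b)`, both trajectory sums of entropies become `Σ_{a,b} negMulLog ε(a, b)`
plus `Σ ρ log ρ`, over the nonterminal states for `H[P_F]` and over the noninitial states for
`P_B^F`. The difference is `ρ(s₀) log ρ(s₀) - Σ_x ρ(x) log ρ(x) = -Σ_x ρ(x) log ρ(x)`, which is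
the correction term once `F = Z·ρ` and `Σ_x ρ(x) = 1` are substituted.
-/
open Finset Real

section States

variable {D : ℕ}

lemma IsChild.numAssigned_eq {s s' : GState D} (h : IsChild s s') :
    numAssigned s' = numAssigned s + 1 := by
  obtain ⟨i, b, hi, rfl⟩ := h
  unfold numAssigned
  rw [← card_insert_of_notMem (s := univ.filter fun j => s j ≠ none) (a := i) (by simp [hi])]
  congr 1
  ext j
  by_cases hj : j = i
  · subst hj; simp
  · simp [hj]

lemma numAssigned_le (s : GState D) : numAssigned s ≤ D :=
  (card_filter_le _ _).trans_eq (by simp)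

lemma isTerminal_iff_numAssigned_eq {s : GState D} : IsTerminal s ↔ numAssigned s = D := by
  have h := card_eq_iff_eq_univ (univ.filter fun i => s i ≠ none)
  rw [Fintype.card_fin] at h
  rw [numAssigned, h, filter_eq_self]
  simp [IsTerminal]

lemma isTerminal_iff_exists_ofX {s : GState D} : IsTerminal s ↔ ∃ x, s = ofX x := by
  refine ⟨fun h => ⟨fun i => (s i).getD false, funext fun i => ?_⟩, ?_⟩
  · obtain ⟨b, hb⟩ := Option.ne_none_iff_exists'.mp (h i)
    simp [ofX, hb]
  · rintro ⟨x, rfl⟩ i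
    simp [ofX]

lemma ofX_injective : Function.Injective (ofX (D := D)) := fun _ _ h =>
  funext fun i => Option.some_injective _ (congrFun h i)

lemma IsTerminal.not_isChild {s s' : GState D} (h : IsTerminal s) : ¬ IsChild s s' := by
  rintro ⟨i, b, hi, -⟩
  exact h i hi

lemma not_isChild_initState {s : GState D} : ¬ IsChild s (initState D) := by
  rintro ⟨i, b, -, h⟩
  simpa [initState] using congrFun h i

lemma exists_isChild_of_not_isTerminal {s : GState D} (h : ¬ IsTerminal s) :
    ∃ c, IsChild s c := by
  obtain ⟨i, hi⟩ : ∃ i, s i = none := by simpa [IsTerminal] using h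
  exact ⟨_, i, false, hi, rfl⟩

lemma exists_isChild_of_ne_initState {s : GState D} (h : s ≠ initState D) :
    ∃ p, IsChild p s := by
  obtain ⟨i, hi⟩ : ∃ i, s i ≠ none := by
    by_contra! hs
    exact h (funext hs)
  obtain ⟨b, hb⟩ := Option.ne_none_iff_exists'.mp hi
  exact ⟨Function.update s i none, i, b, by simp, by simp [← hb]⟩

end States

namespace List

variable {α β : Type*}

theorem mem_zip_tail_iff {l : List α} {a b : α} :
    (a, b) ∈ l.zip l.tail ↔ ∃ u v, l = u ++ a :: b :: v := by
  induction l using twoStepInduction with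
  | nil => simp
  | singleton x =>
    simp only [tail_cons, zip_nil_right, not_mem_nil, false_iff, not_exists]
    intro u v h
    have := congrArg length h
    simp only [length_cons, length_nil, length_append] at this
    omega
  | cons_cons x y l _ ih =>
    have ih' : (a, b) ∈ (y :: l).zip l ↔ _ := ih y
    rw [tail_cons, zip_cons_cons, mem_cons, ih']
    constructor
    · rintro (h | ⟨u, v, h⟩)
      · obtain ⟨rfl, rfl⟩ := Prod.mk.inj h
        exact ⟨[], l, rfl⟩
      · exact ⟨x :: u, v, by rw [h, cons_append]⟩
    · rintro ⟨_ | ⟨z, u⟩, v, h⟩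
      · simp_all
      · exact Or.inr ⟨u, v, (cons.inj h).2⟩

theorem IsChain.rel_of_mem_zip_tail {R : α → α → Prop} {l : List α} (h : l.IsChain R) {a b : α}
    (hab : (a, b) ∈ l.zip l.tail) : R a b := by
  obtain ⟨u, v, rfl⟩ := mem_zip_tail_iff.mp hab
  exact isChain_iff_forall_rel_of_append_cons_cons.mp h rfl

theorem map_fst_zip_tail (l : List α) : (l.zip l.tail).map Prod.fst = l.dropLast := by
  induction l using twoStepInduction with
  | nil => rfl
  | singleton x => rfl
  | cons_cons x y l _ ih => simp [← ih]

theorem map_snd_zip_tail (l : List α) : (l.zip l.tail).map Prod.snd = l.tail :=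
  map_snd_zip (by simp)

theorem sum_ite_mem_of_nodup_map_fst [Fintype β] [DecidableEq α] [DecidableEq β]
    {M : Type*} [AddCommMonoid M] {E : List (α × β)} (hE : (E.map Prod.fst).Nodup)
    (a : α) (x : M) :
    ∑ b, (if (a, b) ∈ E then x else 0) = if a ∈ E.map Prod.fst then x else 0 := by
  split_ifs with ha
  · obtain ⟨⟨a', b₀⟩, hb₀, rfl : a' = a⟩ := mem_map.mp ha
    rw [Fintype.sum_eq_single b₀ fun b hb => if_neg fun (hab : (a', b) ∈ E) =>
      hb (congrArg Prod.snd (inj_on_of_nodup_map hE hab hb₀ rfl)), if_pos hb₀]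
  · exact Finset.sum_eq_zero fun b _ => if_neg fun hab => ha (mem_map_of_mem hab)

theorem sum_ite_mem_of_nodup_map_snd [Fintype α] [DecidableEq α] [DecidableEq β]
    {M : Type*} [AddCommMonoid M] {E : List (α × β)} (hE : (E.map Prod.snd).Nodup)
    (b : β) (x : M) :
    ∑ a, (if (a, b) ∈ E then x else 0) = if b ∈ E.map Prod.snd then x else 0 := by
  have h := sum_ite_mem_of_nodup_map_fst (E := E.map Prod.swap)
    (by simpa [map_map, Function.comp_def] using hE) b x
  simpa [map_map, Function.comp_def, mem_map_swap] using h

end List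

theorem Finset.sum_mul_sum_map_eq {ι α R : Type*} [Fintype α] [DecidableEq α] [CommSemiring R]
    (T : Finset ι) (w : ι → R) (L : ι → List α) (hL : ∀ i ∈ T, (L i).Nodup) (f : α → R) :
    ∑ i ∈ T, w i * ((L i).map f).sum = ∑ a, (∑ i ∈ T with a ∈ L i, w i) * f a := by
  simp_rw [sum_filter, sum_mul]
  rw [sum_comm]
  refine sum_congr rfl fun i hi => ?_
  rw [← List.sum_toFinset f (hL i hi), mul_sum]
  simp only [ite_mul, zero_mul, ← sum_filter]
  exact sum_congr (by ext; simp) fun _ _ => rfl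

theorem Real.mul_sum_negMulLog_div {ι : Type*} (s : Finset ι) (p : ι → ℝ) {m : ℝ} (hm : m ≠ 0)
    (hp : ∑ i ∈ s, p i = m) :
    m * ∑ i ∈ s, negMulLog (p i / m) = ∑ i ∈ s, negMulLog (p i) + m * log m := by
  have h : ∀ i, negMulLog (p i) = p i / m * negMulLog m + m * negMulLog (p i / m) := fun i => by
    rw [← negMulLog_mul, mul_div_cancel₀ _ hm]
  simp_rw [h, sum_add_distrib, ← sum_mul, ← mul_sum, ← sum_div, hp, div_self hm, negMulLog]
  ring

theorem Finset.sum_ite_sub_sum_ite_ne {α M : Type*} [Fintype α] [DecidableEq α] [AddCommGroup M]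
    (P : α → Prop) [DecidablePred P] (a₀ : α) (f : α → M) :
    (∑ a, if P a then 0 else f a) - ∑ a, (if a = a₀ then 0 else f a)
      = f a₀ - ∑ a, if P a then f a else 0 := by
  have h : f a₀ = ∑ a, if a = a₀ then f a else 0 := by simp
  rw [sub_eq_sub_iff_add_eq_add, h, ← sum_add_distrib, ← sum_add_distrib]
  exact sum_congr rfl fun a _ => by split_ifs <;> simp

section Paths

variable {D : ℕ}

lemma numAssigned_getLast_of_isChain {s : GState D} {l : List (GState D)}
    (h : (s :: l).IsChain IsChild) :
    numAssigned ((s :: l).getLast (List.cons_ne_nil s l)) = numAssigned s + l.length := by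
  induction l generalizing s with
  | nil => rfl
  | cons c l ih =>
    rw [List.isChain_cons_cons] at h
    rw [List.getLast_cons_cons, ih h.2, h.1.numAssigned_eq, List.length_cons]
    omega

lemma List.IsChain.nodup_of_isChild {l : List (GState D)} (h : l.IsChain IsChild) : l.Nodup := by
  have hlt : (l.map numAssigned).IsChain (· < ·) :=
    List.isChain_map_of_isChain _ (fun _ _ hab => by rw [hab.numAssigned_eq]; omega) h
  exact List.Nodup.of_map _ ((List.isChain_iff_pairwise.mp hlt).imp Nat.ne_of_lt)

lemma IsPath.isChain {l : List (GState D)} {s t : GState D} (h : IsPath l s t) :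
    l.IsChain IsChild := h.1

lemma isPath_singleton (s : GState D) : IsPath [s] s s :=
  ⟨List.isChain_singleton s, rfl, rfl⟩

lemma IsPath.eq_cons {l : List (GState D)} {s t : GState D} (h : IsPath l s t) :
    l = s :: l.tail :=
  List.eq_cons_of_mem_head? h.2.1

lemma IsPath.numAssigned_add_length {l : List (GState D)} {s t : GState D} (h : IsPath l s t) :
    numAssigned s + l.length = numAssigned t + 1 := by
  have hl := h.eq_cons
  have hc := h.isChain
  have ht := h.2.2
  rw [hl] at hc ht
  rw [List.getLast?_eq_some_getLast (List.cons_ne_nil _ _), Option.some_inj] at ht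
  rw [hl, ← ht, numAssigned_getLast_of_isChain hc, List.length_cons]
  omega

lemma IsPath.eq_singleton {l : List (GState D)} {s t : GState D} (h : IsPath l s t)
    (hst : numAssigned t ≤ numAssigned s) : l = [s] := by
  have hl := h.eq_cons
  have hlen := h.numAssigned_add_length
  rw [hl, List.length_cons] at hlen
  have htail : l.tail = [] := List.length_eq_zero_iff.mp (by omega)
  rw [hl, htail]

lemma IsPath.cons {l : List (GState D)} {a b t : GState D} (hab : IsChild a b)
    (h : IsPath l b t) : IsPath (a :: l) a t := by
  have hl := h.eq_cons
  refine ⟨?_, rfl, ?_⟩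
  · rw [hl]
    exact List.IsChain.cons_cons hab (hl ▸ h.isChain)
  · rw [hl, List.getLast?_cons_cons, ← hl]
    exact h.2.2

lemma IsPath.append_tail {p q : List (GState D)} {r a t : GState D} (hp : IsPath p r a)
    (hq : IsPath q a t) : IsPath (p ++ q.tail) r t := by
  obtain ⟨p₀, rfl⟩ := List.getLast?_eq_some_iff.mp hp.2.2
  have hq' := hq.eq_cons
  refine ⟨?_, ?_, ?_⟩
  · have := hq.isChain
    rw [hq'] at this
    exact hp.isChain.append_overlap (l₂ := [a]) this (List.cons_ne_nil _ _)
  · simpa using hp.2.1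
  · have := hq.2.2
    rw [hq'] at this
    simpa using this

lemma finite_setOf_isChain_isChild (D : ℕ) :
    {l : List (GState D) | l.IsChain IsChild}.Finite := by
  refine (List.finite_length_le _ (D + 1)).subset fun l (hl : l.IsChain IsChild) => ?_
  cases l with
  | nil => simp
  | cons s l =>
    have := numAssigned_getLast_of_isChain hl
    have := numAssigned_le ((s :: l).getLast (List.cons_ne_nil s l))
    show l.length + 1 ≤ D + 1
    omega

end Paths

section PathSets

variable {D : ℕ}

def IsTerminalPath (l : List (GState D)) (r : GState D) : Prop :=
  ∃ t, IsPath l r t ∧ IsTerminal t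

noncomputable def pathsBetween (r t : GState D) : Finset (List (GState D)) :=
  ((finite_setOf_isChain_isChild D).subset fun _ (h : IsPath _ r t) => h.isChain).toFinset

noncomputable def terminalPaths (r : GState D) : Finset (List (GState D)) :=
  ((finite_setOf_isChain_isChild D).subset
    fun _ (h : IsTerminalPath _ r) => h.choose_spec.1.isChain).toFinset

@[simp] lemma mem_pathsBetween {l : List (GState D)} {r t : GState D} :
    l ∈ pathsBetween r t ↔ IsPath l r t :=
  Set.Finite.mem_toFinset _

@[simp] lemma mem_terminalPaths {l : List (GState D)} {r : GState D} :
    l ∈ terminalPaths r ↔ IsTerminalPath l r :=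
  Set.Finite.mem_toFinset _

lemma isCompleteTraj_iff_isTerminalPath {l : List (GState D)} :
    IsCompleteTraj l ↔ IsTerminalPath l (initState D) := by
  simp only [IsCompleteTraj, IsTerminalPath, IsPath]
  constructor
  · rintro ⟨hh, hc, t, ht, htt⟩
    exact ⟨t, ⟨hc, hh, ht⟩, htt⟩
  · rintro ⟨t, ⟨hc, hh, ht⟩, htt⟩
    exact ⟨hh, hc, t, ht, htt⟩

lemma pathsBetween_self (r : GState D) : pathsBetween r r = {[r]} := by
  ext l
  refine ⟨fun h => ?_, fun h => ?_⟩
  · exact mem_singleton.mpr ((mem_pathsBetween.mp h).eq_singleton le_rfl)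
  · rw [mem_singleton.mp h, mem_pathsBetween]
    exact isPath_singleton r

lemma terminalPaths_of_isTerminal {r : GState D} (hr : IsTerminal r) :
    terminalPaths r = {[r]} := by
  ext l
  refine ⟨fun h => ?_, fun h => ?_⟩
  · obtain ⟨t, ht, -⟩ := mem_terminalPaths.mp h
    exact mem_singleton.mpr
      (ht.eq_singleton ((numAssigned_le t).trans_eq (isTerminal_iff_numAssigned_eq.mp hr).symm))
  · rw [mem_singleton.mp h, mem_terminalPaths]
    exact ⟨r, isPath_singleton r, hr⟩

lemma coe_filter_terminalPaths_initState (P : List (GState D) → Prop) [DecidablePred P] :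
    (((terminalPaths (initState D)).filter P : Finset _) : Set (List (GState D)))
      = {l | IsCompleteTraj l ∧ P l} := by
  ext l
  simp [isCompleteTraj_iff_isTerminalPath]

lemma coe_terminalPaths_initState :
    ((terminalPaths (initState D) : Finset _) : Set (List (GState D)))
      = {l | IsCompleteTraj l} := by
  ext l
  simp [isCompleteTraj_iff_isTerminalPath]

namespace IsTerminalPath

variable {l : List (GState D)} {r : GState D}

lemma isChain (h : IsTerminalPath l r) : l.IsChain IsChild :=
  h.choose_spec.1.isChain

lemma eq_cons (h : IsTerminalPath l r) : l = r :: l.tail :=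
  h.choose_spec.1.eq_cons

lemma nodup (h : IsTerminalPath l r) : l.Nodup :=
  h.isChain.nodup_of_isChild

lemma mem (h : IsTerminalPath l r) : r ∈ l := by
  rw [h.eq_cons]
  exact List.mem_cons_self

lemma mem_dropLast_iff (h : IsTerminalPath l r) {a : GState D} :
    a ∈ l.dropLast ↔ a ∈ l ∧ ¬ IsTerminal a := by
  obtain ⟨t, ht, htt⟩ := h
  obtain ⟨l₀, rfl⟩ := List.getLast?_eq_some_iff.mp ht.2.2
  refine ⟨fun ha => ⟨List.mem_of_mem_dropLast ha, fun hta => ?_⟩, fun ⟨ha, hta⟩ => ?_⟩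
  · rw [← List.map_fst_zip_tail] at ha
    obtain ⟨⟨_, b⟩, hab, rfl⟩ := List.mem_map.mp ha
    exact hta.not_isChild (ht.isChain.rel_of_mem_zip_tail hab)
  · rw [List.dropLast_concat]
    rcases List.mem_append.mp ha with ha | ha
    · exact ha
    · exact absurd (List.mem_singleton.mp ha ▸ htt) hta

lemma mem_tail_iff (h : IsTerminalPath l r) {b : GState D} :
    b ∈ l.tail ↔ b ∈ l ∧ b ≠ r := by
  have hl := h.eq_cons
  have hnd := h.nodup
  rw [hl, List.nodup_cons] at hnd
  conv_rhs => rw [hl]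
  refine ⟨fun hb => ⟨List.mem_cons_of_mem r hb, fun hbr => hnd.1 (hbr ▸ hb)⟩, fun ⟨hb, hbr⟩ => ?_⟩
  exact (List.mem_cons.mp hb).resolve_left hbr

end IsTerminalPath

end PathSets

section Gluing

variable {D : ℕ}

lemma IsPath.append_isTerminalPath {p q : List (GState D)} {r a b : GState D}
    (hp : IsPath p r a) (hab : IsChild a b) (hq : IsTerminalPath q b) :
    IsTerminalPath (p ++ q) r :=
  let ⟨t, ht, htt⟩ := hq
  ⟨t, hp.append_tail (ht.cons hab), htt⟩

lemma IsTerminalPath.split {u v : List (GState D)} {r a b : GState D}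
    (h : IsTerminalPath (u ++ a :: b :: v) r) :
    IsPath (u ++ [a]) r a ∧ IsTerminalPath (b :: v) b := by
  obtain ⟨t, ⟨hc, hh, hl⟩, htt⟩ := h
  have hc' : (u ++ a :: b :: v).IsChain IsChild := hc
  rw [List.isChain_append_cons_cons] at hc'
  refine ⟨⟨hc'.1, by simpa using hh, by simp⟩, t, ⟨hc'.2.2, rfl, ?_⟩, htt⟩
  simpa using hl

end Gluing

section TrajPF

variable {D : ℕ} (PF : GState D → GState D → ℝ)

lemma trajPF_singleton (a : GState D) : trajPF PF [a] = 1 := rfl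

lemma trajPF_cons_cons (a b : GState D) (l : List (GState D)) :
    trajPF PF (a :: b :: l) = PF a b * trajPF PF (b :: l) := rfl

lemma trajPF_append_cons_cons (u v : List (GState D)) (a b : GState D) :
    trajPF PF (u ++ a :: b :: v) = trajPF PF (u ++ [a]) * PF a b * trajPF PF (b :: v) := by
  induction u using List.twoStepInduction with
  | nil => rw [List.nil_append, List.nil_append, trajPF_cons_cons, trajPF_singleton, one_mul]
  | singleton x =>
    simp only [List.cons_append, List.nil_append, trajPF_cons_cons, trajPF_singleton]
    ring
  | cons_cons x y u _ ih =>
    simp only [List.cons_append] at ih ⊢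
    rw [trajPF_cons_cons, trajPF_cons_cons, ih y]
    ring

lemma trajPF_pos (hFpos : ∀ s s' : GState D, IsChild s s' → 0 < PF s s')
    {l : List (GState D)} (hl : l.IsChain IsChild) : 0 < trajPF PF l :=
  List.prod_pos fun _ hx =>
    let ⟨⟨_, _⟩, hab, hx⟩ := List.mem_map.mp hx
    hx ▸ hFpos _ _ (hl.rel_of_mem_zip_tail hab)

end TrajPF

section Weights

variable {D : ℕ} (PF : GState D → GState D → ℝ)

/- For `r = initState D` these are `F(a)/Z` and `F(a→b)/Z`; other roots `r` are needed to show by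
induction that the terminal paths from any state have total mass `1`. -/
noncomputable def visitWeight (r a : GState D) : ℝ :=
  ∑ l ∈ terminalPaths r with a ∈ l, trajPF PF l

noncomputable def edgeWeight (r a b : GState D) : ℝ :=
  ∑ l ∈ terminalPaths r with (a, b) ∈ l.zip l.tail, trajPF PF l

lemma visitWeight_self (r : GState D) :
    visitWeight PF r r = ∑ l ∈ terminalPaths r, trajPF PF l := by
  rw [visitWeight, filter_true_of_mem fun l hl => (mem_terminalPaths.mp hl).mem]

lemma stateFlow_eq (Z : ℝ) (s : GState D) :
    stateFlow PF Z s = Z * visitWeight PF (initState D) s := by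
  rw [stateFlow, ← coe_filter_terminalPaths_initState, finsum_mem_coe_finset, visitWeight, mul_sum]

lemma edgeFlow_eq (Z : ℝ) (a b : GState D) :
    edgeFlow PF Z a b = Z * edgeWeight PF (initState D) a b := by
  rw [edgeFlow, ← coe_filter_terminalPaths_initState, finsum_mem_coe_finset, edgeWeight, mul_sum]

lemma edgeWeight_eq_zero_of_not_isChild {r a b : GState D} (hab : ¬ IsChild a b) :
    edgeWeight PF r a b = 0 :=
  sum_eq_zero fun _ hl => absurd
    ((mem_terminalPaths.mp (mem_filter.mp hl).1).isChain.rel_of_mem_zip_tail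
      (mem_filter.mp hl).2) hab

lemma sum_filter_mem_dropLast (r a : GState D) :
    ∑ l ∈ terminalPaths r with a ∈ l.dropLast, trajPF PF l
      = if IsTerminal a then 0 else visitWeight PF r a := by
  split_ifs with ha
  · exact sum_eq_zero fun l hl => absurd ha
      ((mem_terminalPaths.mp (mem_filter.mp hl).1).mem_dropLast_iff.mp (mem_filter.mp hl).2).2
  · exact sum_congr (filter_congr fun l hl =>
      ((mem_terminalPaths.mp hl).mem_dropLast_iff.trans (and_iff_left ha))) fun _ _ => rfl

lemma sum_filter_mem_tail (r b : GState D) :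
    ∑ l ∈ terminalPaths r with b ∈ l.tail, trajPF PF l
      = if b = r then 0 else visitWeight PF r b := by
  split_ifs with hb
  · exact sum_eq_zero fun l hl => absurd hb
      ((mem_terminalPaths.mp (mem_filter.mp hl).1).mem_tail_iff.mp (mem_filter.mp hl).2).2
  · exact sum_congr (filter_congr fun l hl =>
      ((mem_terminalPaths.mp hl).mem_tail_iff.trans (and_iff_left hb))) fun _ _ => rfl

lemma sum_edgeWeight_right (r a : GState D) :
    ∑ b, edgeWeight PF r a b = if IsTerminal a then 0 else visitWeight PF r a := by
  rw [← sum_filter_mem_dropLast]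
  simp only [edgeWeight, sum_filter]
  rw [sum_comm]
  refine sum_congr rfl fun l hl => ?_
  have hnd : ((l.zip l.tail).map Prod.fst).Nodup := by
    rw [List.map_fst_zip_tail]
    exact (mem_terminalPaths.mp hl).nodup.sublist (List.dropLast_sublist l)
  rw [List.sum_ite_mem_of_nodup_map_fst hnd, List.map_fst_zip_tail]

lemma sum_edgeWeight_left (r b : GState D) :
    ∑ a, edgeWeight PF r a b = if b = r then 0 else visitWeight PF r b := by
  rw [← sum_filter_mem_tail]
  simp only [edgeWeight, sum_filter]
  rw [sum_comm]
  refine sum_congr rfl fun l hl => ?_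
  have hnd : ((l.zip l.tail).map Prod.snd).Nodup := by
    rw [List.map_snd_zip_tail]
    exact (mem_terminalPaths.mp hl).nodup.sublist (List.tail_sublist l)
  rw [List.sum_ite_mem_of_nodup_map_snd hnd, List.map_snd_zip_tail]

lemma edgeWeight_eq_of_isChild {r a b : GState D} (hab : IsChild a b) :
    edgeWeight PF r a b = (∑ p ∈ pathsBetween r a, trajPF PF p) * PF a b
      * ∑ q ∈ terminalPaths b, trajPF PF q := by
  rw [sum_mul, sum_mul_sum, ← sum_product', edgeWeight]
  symm
  refine sum_nbij (fun x => x.1 ++ x.2) ?_ ?_ ?_ ?_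
  · rintro ⟨p, q⟩ hpq
    rw [mem_product, mem_pathsBetween, mem_terminalPaths] at hpq
    obtain ⟨hp, hq⟩ := hpq
    obtain ⟨p₀, rfl⟩ := List.getLast?_eq_some_iff.mp hp.2.2
    rw [mem_filter, mem_terminalPaths]
    refine ⟨hp.append_isTerminalPath hab hq, List.mem_zip_tail_iff.mpr ⟨p₀, q.tail, ?_⟩⟩
    rw [hq.eq_cons]
    simp
  · rintro ⟨p₁, q₁⟩ h₁ ⟨p₂, q₂⟩ h₂ heq
    simp only [coe_product, Set.mem_prod, mem_coe, mem_pathsBetween] at h₁ h₂ heq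
    -- the cut is determined, since a path from `r` to `a` has `numAssigned a - numAssigned r + 1`
    -- states
    have hlen := h₁.1.numAssigned_add_length.trans h₂.1.numAssigned_add_length.symm
    obtain ⟨rfl, rfl⟩ := List.append_inj heq (by omega)
    rfl
  · intro l hl
    rw [mem_coe, mem_filter, mem_terminalPaths] at hl
    obtain ⟨u, v, rfl⟩ := List.mem_zip_tail_iff.mp hl.2
    obtain ⟨hp, hq⟩ := hl.1.split
    exact ⟨(u ++ [a], b :: v), by simp [hp, hq], by simp⟩
  · rintro ⟨p, q⟩ hpq
    rw [mem_product, mem_pathsBetween, mem_terminalPaths] at hpq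
    obtain ⟨hp, hq⟩ := hpq
    obtain ⟨p₀, rfl⟩ := List.getLast?_eq_some_iff.mp hp.2.2
    dsimp only at hq ⊢
    rw [hq.eq_cons, List.append_assoc, List.singleton_append, trajPF_append_cons_cons]

end Weights

section Policy

variable {D : ℕ} {PF : GState D → GState D → ℝ}

lemma IsForwardPolicy.eq_zero_of_not_isChild (hPF : IsForwardPolicy PF) {a b : GState D}
    (ha : ¬ IsTerminal a) (hab : ¬ IsChild a b) : PF a b = 0 :=
  not_not.mp fun h => hab ((hPF a ha).2.1 b h)

theorem IsForwardPolicy.sum_trajPF_terminalPaths (hPF : IsForwardPolicy PF) (r : GState D) :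
    ∑ l ∈ terminalPaths r, trajPF PF l = 1 := by
  by_cases hr : IsTerminal r
  · rw [terminalPaths_of_isTerminal hr, sum_singleton, trajPF_singleton]
  calc ∑ l ∈ terminalPaths r, trajPF PF l
      = ∑ b, edgeWeight PF r r b := by rw [sum_edgeWeight_right, if_neg hr, visitWeight_self]
    _ = ∑ b, PF r b := sum_congr rfl fun b _ => by
      by_cases hb : IsChild r b
      · rw [edgeWeight_eq_of_isChild PF hb, pathsBetween_self, sum_singleton,
          hPF.sum_trajPF_terminalPaths b, trajPF_singleton, one_mul, mul_one]
      · rw [edgeWeight_eq_zero_of_not_isChild PF hb, hPF.eq_zero_of_not_isChild hr hb]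
    _ = 1 := (hPF r hr).2.2
termination_by D - numAssigned r
decreasing_by
  have := hb.numAssigned_eq
  have := numAssigned_le b
  omega

lemma IsForwardPolicy.edgeWeight_eq_visitWeight_mul (hPF : IsForwardPolicy PF)
    {r a : GState D} (ha : ¬ IsTerminal a) (b : GState D) :
    edgeWeight PF r a b = visitWeight PF r a * PF a b := by
  have hmul : ∀ b, edgeWeight PF r a b = (∑ p ∈ pathsBetween r a, trajPF PF p) * PF a b := by
    intro b
    by_cases hab : IsChild a b
    · rw [edgeWeight_eq_of_isChild PF hab, hPF.sum_trajPF_terminalPaths, mul_one]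
    · rw [edgeWeight_eq_zero_of_not_isChild PF hab, hPF.eq_zero_of_not_isChild ha hab, mul_zero]
  have hvisit : visitWeight PF r a = ∑ p ∈ pathsBetween r a, trajPF PF p := by
    have h := sum_edgeWeight_right PF r a
    rw [if_neg ha] at h
    rw [← h, sum_congr rfl fun b _ => hmul b, ← mul_sum, (hPF a ha).2.2, mul_one]
  rw [hmul, hvisit]

end Policy

section Existence

variable {D : ℕ}

lemma exists_isPath_initState (s : GState D) : ∃ p, IsPath p (initState D) s := by
  by_cases hs : s = initState D
  · exact ⟨[s], hs ▸ isPath_singleton s⟩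
  obtain ⟨a, ha⟩ := exists_isChild_of_ne_initState hs
  obtain ⟨p, hp⟩ := exists_isPath_initState a
  exact ⟨p ++ [s], hp.append_tail ((isPath_singleton s).cons ha)⟩
termination_by numAssigned s
decreasing_by
  have := ha.numAssigned_eq
  omega

lemma exists_isTerminalPath (s : GState D) : ∃ q, IsTerminalPath q s := by
  by_cases hs : IsTerminal s
  · exact ⟨[s], s, isPath_singleton s, hs⟩
  obtain ⟨c, hc⟩ := exists_isChild_of_not_isTerminal hs
  obtain ⟨q, t, hq, ht⟩ := exists_isTerminalPath c
  exact ⟨s :: q, t, hq.cons hc, ht⟩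
termination_by D - numAssigned s
decreasing_by
  have := hc.numAssigned_eq
  have := numAssigned_le c
  omega

lemma exists_isTerminalPath_initState_mem (s : GState D) :
    ∃ l, IsTerminalPath l (initState D) ∧ s ∈ l := by
  obtain ⟨p, hp⟩ := exists_isPath_initState s
  obtain ⟨q, t, hq, ht⟩ := exists_isTerminalPath s
  exact ⟨p ++ q.tail, ⟨t, hp.append_tail hq, ht⟩,
    List.mem_append_left _ (List.mem_of_getLast? hp.2.2)⟩

end Existence

section Positivity

variable {D : ℕ} {PF : GState D → GState D → ℝ}

lemma visitWeight_initState_pos (hFpos : ∀ s s' : GState D, IsChild s s' → 0 < PF s s')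
    (s : GState D) : 0 < visitWeight PF (initState D) s := by
  obtain ⟨l, hl, hs⟩ := exists_isTerminalPath_initState_mem s
  exact sum_pos (fun _ hl' =>
      trajPF_pos PF hFpos (mem_terminalPaths.mp (mem_filter.mp hl').1).isChain)
    ⟨l, mem_filter.mpr ⟨mem_terminalPaths.mpr hl, hs⟩⟩

lemma edgeWeight_nonneg (hFpos : ∀ s s' : GState D, IsChild s s' → 0 < PF s s')
    (r a b : GState D) : 0 ≤ edgeWeight PF r a b :=
  sum_nonneg fun _ hl =>
    (trajPF_pos PF hFpos (mem_terminalPaths.mp (mem_filter.mp hl).1).isChain).le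

end Positivity

section Flows

variable {D : ℕ} {PF : GState D → GState D → ℝ}

lemma isBackwardPolicy_edgeWeight_div (hFpos : ∀ s s' : GState D, IsChild s s' → 0 < PF s s') :
    IsBackwardPolicy fun s' s =>
      edgeWeight PF (initState D) s s' / visitWeight PF (initState D) s' := by
  intro s' hs'
  have hρ := visitWeight_initState_pos hFpos s'
  refine ⟨fun s => div_nonneg (edgeWeight_nonneg hFpos _ _ _) hρ.le, fun s hs => ?_, ?_⟩
  · by_contra hc
    exact hs (by simp only [edgeWeight_eq_zero_of_not_isChild PF hc, zero_div])
  · rw [← sum_div, sum_edgeWeight_left, if_neg hs', div_self hρ.ne']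

lemma IsForwardPolicy.flowEntropy_eq (hPF : IsForwardPolicy PF)
    (hFpos : ∀ s s' : GState D, IsChild s s' → 0 < PF s s') :
    flowEntropy PF = ∑ a, ∑ b, negMulLog (edgeWeight PF (initState D) a b)
      + ∑ a, if IsTerminal a then 0
          else visitWeight PF (initState D) a * log (visitWeight PF (initState D) a) := by
  rw [flowEntropy, ← coe_terminalPaths_initState, finsum_mem_coe_finset,
    sum_mul_sum_map_eq _ _ _ fun l hl =>
      (mem_terminalPaths.mp hl).nodup.sublist (List.dropLast_sublist l), ← sum_add_distrib]
  refine sum_congr rfl fun a _ => ?_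
  rw [sum_filter_mem_dropLast]
  split_ifs with ha
  · simp [edgeWeight_eq_zero_of_not_isChild PF ha.not_isChild]
  · have hρ := visitWeight_initState_pos hFpos a
    have hPFa : ∀ b, PF a b = edgeWeight PF (initState D) a b / visitWeight PF (initState D) a :=
      fun b => by rw [hPF.edgeWeight_eq_visitWeight_mul ha, mul_div_cancel_left₀ _ hρ.ne']
    have hsum := sum_edgeWeight_right PF (initState D) a
    rw [if_neg ha] at hsum
    simp only [stepEntropyF, hPFa]
    exact mul_sum_negMulLog_div _ _ hρ.ne' hsum

lemma sum_trajPF_mul_sum_backwardEntropy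
    (hFpos : ∀ s s' : GState D, IsChild s s' → 0 < PF s s') :
    ∑ᶠ l ∈ {l : List (GState D) | IsCompleteTraj l},
        trajPF PF l * (l.tail.map fun t => ∑ s : GState D,
          negMulLog (edgeWeight PF (initState D) s t / visitWeight PF (initState D) t)).sum
      = ∑ a, ∑ b, negMulLog (edgeWeight PF (initState D) a b)
        + ∑ b, if b = initState D then 0
            else visitWeight PF (initState D) b * log (visitWeight PF (initState D) b) := by
  rw [← coe_terminalPaths_initState, finsum_mem_coe_finset,
    sum_mul_sum_map_eq _ _ _ fun l hl =>
      (mem_terminalPaths.mp hl).nodup.sublist (List.tail_sublist l), sum_comm (γ := GState D),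
    ← sum_add_distrib]
  refine sum_congr rfl fun b _ => ?_
  rw [sum_filter_mem_tail]
  split_ifs with hb
  · simp [hb, edgeWeight_eq_zero_of_not_isChild PF not_isChild_initState]
  · have hsum := sum_edgeWeight_left PF (initState D) b
    rw [if_neg hb] at hsum
    exact mul_sum_negMulLog_div _ _ (visitWeight_initState_pos hFpos b).ne' hsum

lemma sum_ite_not_isTerminal_sub_sum_ite_ne {M : Type*} [AddCommGroup M] (f : GState D → M) :
    (∑ a, if IsTerminal a then 0 else f a) - ∑ a, (if a = initState D then 0 else f a)
      = f (initState D) - ∑ x, f (ofX x) := by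
  have himage : univ.filter (IsTerminal (D := D)) = univ.map ⟨ofX, ofX_injective⟩ := by
    ext
    simp [isTerminal_iff_exists_ofX, eq_comm]
  rw [sum_ite_sub_sum_ite_ne, ← sum_filter, himage, sum_map]
  rfl

lemma IsForwardPolicy.visitWeight_initState_self (hPF : IsForwardPolicy PF) :
    visitWeight PF (initState D) (initState D) = 1 := by
  rw [visitWeight_self, hPF.sum_trajPF_terminalPaths]

lemma IsForwardPolicy.sum_visitWeight_ofX (hPF : IsForwardPolicy PF) :
    ∑ x, visitWeight PF (initState D) (ofX x) = 1 := by
  have h := sum_ite_not_isTerminal_sub_sum_ite_ne (visitWeight PF (initState D))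
  simp only [← sum_edgeWeight_right, ← sum_edgeWeight_left] at h
  rw [sum_comm, sub_self, hPF.visitWeight_initState_self] at h
  linarith

lemma IsForwardPolicy.one_div_mul_sum_stateFlow_mul_log (hPF : IsForwardPolicy PF)
    (hFpos : ∀ s s' : GState D, IsChild s s' → 0 < PF s s') {Z : ℝ} (hZ : 0 < Z) :
    (1 / Z) * ∑ x, stateFlow PF Z (ofX x) * log (stateFlow PF Z (ofX x))
      = log Z + ∑ x, visitWeight PF (initState D) (ofX x)
          * log (visitWeight PF (initState D) (ofX x)) := by
  have h : ∀ x, stateFlow PF Z (ofX x) * log (stateFlow PF Z (ofX x))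
      = Z * (visitWeight PF (initState D) (ofX x) * log Z
        + visitWeight PF (initState D) (ofX x) * log (visitWeight PF (initState D) (ofX x))) := by
    intro x
    rw [stateFlow_eq, log_mul hZ.ne' (visitWeight_initState_pos hFpos _).ne']
    ring
  rw [sum_congr rfl fun x _ => h x, ← mul_sum, sum_add_distrib, ← sum_mul, hPF.sum_visitWeight_ofX]
  field_simp

end Flows

theorem statement6_general {D : ℕ}
    (PF : GState D → GState D → ℝ) (hPF : IsForwardPolicy PF)
    (hFpos : ∀ s s' : GState D, IsChild s s' → 0 < PF s s')
    (Z : ℝ) (hZ : 0 < Z) :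
    (∀ s : GState D, 0 < stateFlow PF Z s) ∧
    IsBackwardPolicy (fun s' s => edgeFlow PF Z s s' / stateFlow PF Z s') ∧
    flowEntropy PF =
      (∑ᶠ l ∈ {l : List (GState D) | IsCompleteTraj l},
        trajPF PF l *
          (l.tail.map fun t =>
            ∑ s : GState D,
              Real.negMulLog (edgeFlow PF Z s t / stateFlow PF Z t)).sum)
      + Real.log Z
      - (1 / Z) * ∑ x : Fin D → Bool,
          stateFlow PF Z (ofX x) * Real.log (stateFlow PF Z (ofX x)) := by
  have hratio : ∀ s t, edgeFlow PF Z s t / stateFlow PF Z t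
      = edgeWeight PF (initState D) s t / visitWeight PF (initState D) t := fun s t => by
    rw [edgeFlow_eq, stateFlow_eq, mul_div_mul_left _ _ hZ.ne']
  refine ⟨fun s => ?_, ?_, ?_⟩
  · rw [stateFlow_eq]
    exact mul_pos hZ (visitWeight_initState_pos hFpos s)
  · simpa only [hratio] using isBackwardPolicy_edgeWeight_div hFpos
  · have h := sum_ite_not_isTerminal_sub_sum_ite_ne fun a =>
      visitWeight PF (initState D) a * log (visitWeight PF (initState D) a)
    rw [hPF.visitWeight_initState_self, log_one, mul_zero] at h
    simp only [hratio]
    rw [hPF.flowEntropy_eq hFpos, sum_trajPF_mul_sum_backwardEntropy hFpos,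
      hPF.one_div_mul_sum_stateFlow_mul_log hFpos hZ]
    linarith

/-- Let `P_F` be a forward policy positive on every edge of `G` and `Z > 0`.
Then the state flow `F(s)` is positive for every state `s` (every state lies on a complete
trajectory), the induced backward policy `P_B^F(s|s') = F(s→s')/F(s')` is a backward policy,
and
`H[P_F] = Σ_τ P_F(τ)·Σ_{i=1}^{D} H[P_B^F(·|t_i)] + log Z − (1/Z)·Σ_{x∈X} F(x)·log F(x)`. -/
theorem statement6 {D : ℕ} (hD : 1 ≤ D)
    (PF : GState D → GState D → ℝ) (hPF : IsForwardPolicy PF)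
    (hFpos : ∀ s s' : GState D, IsChild s s' → 0 < PF s s')
    (Z : ℝ) (hZ : 0 < Z) :
    (∀ s : GState D, 0 < stateFlow PF Z s) ∧
    IsBackwardPolicy (fun s' s => edgeFlow PF Z s s' / stateFlow PF Z s') ∧
    flowEntropy PF =
      (∑ᶠ l ∈ {l : List (GState D) | IsCompleteTraj l},
        trajPF PF l *
          (l.tail.map fun t =>
            ∑ s : GState D,
              Real.negMulLog (edgeFlow PF Z s t / stateFlow PF Z t)).sum)
      + Real.log Z
      - (1 / Z) * ∑ x : Fin D → Bool,
          stateFlow PF Z (ofX x) * Real.log (stateFlow PF Z (ofX x)) :=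
  statement6_general PF hPF hFpos Z hZ
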